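/- Under the standing assumptions and Assumption 2, let (x_{k+1}, x_{k+1}*) be obtained from (x_k, x_k*) by one exact NBK step with index i_k and step size t_k = t_{k,φ}, assume f_{i_k}(x_k) > 0, and let t ∈ [0, t_k]. Define x_{k+1}*(t) = x_k* − t∇f_{i_k}(x_k) and x_{k+1}(t) = ∇φ*(x_{k+1}*(t)). Then for every solution x̂ ∈ S it holds that D_φ^{x_{k+1}*}(x_{k+1}, x̂) ≤ D_φ^{x_{k+1}*(t)}(x_{k+1}(t), x̂). If moreover φ is σ-strongly convex w.r.t. a norm ‖·‖, the inequality also holds for the relaxed step size t = t_{k,σ} = σ f_{i_k}(x_k)/‖∇f_{i_k}(x_k)‖_*². -/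

import Mathlib

open Set Filter Topology MeasureTheory ProbabilityTheory

noncomputable section

abbrev Euc (d : ℕ) := EuclideanSpace ℝ (Fin d)

/-- Real inner product on `ℝ^d`. -/
def rinn {d : ℕ} (x y : Euc d) : ℝ := inner ℝ x y

/-- Effective domain of an extended-real-valued function. -/
def edom {d : ℕ} (φ : Euc d → EReal) : Set (Euc d) := {x | φ x ≠ ⊤}

/-- Convex subdifferential. -/
def subdiff {d : ℕ} (φ : Euc d → EReal) (x : Euc d) : Set (Euc d) :=
  {u | φ x ≠ ⊤ ∧ ∀ y : Euc d, φ x + ((rinn u (y - x) : ℝ) : EReal) ≤ φ y}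

/-- Domain of the subdifferential. -/
def ddom {d : ℕ} (φ : Euc d → EReal) : Set (Euc d) := {x | (subdiff φ x).Nonempty}

/-- Bregman distance `D_φ^{u}(x,y) = φ(y) - φ(x) - ⟨u, y - x⟩`. -/
def breg {d : ℕ} (φ : Euc d → EReal) (u x y : Euc d) : EReal :=
  φ y - φ x - ((rinn u (y - x) : ℝ) : EReal)

/-- Fenchel conjugate (extended-real-valued). -/
def econj {d : ℕ} (φ : Euc d → EReal) (u : Euc d) : EReal :=
  ⨆ x : Euc d, ((rinn u x : ℝ) : EReal) - φ x

/-- Real-valued Fenchel conjugate (under the standing assumptions `econj` is finite). -/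
def rconj {d : ℕ} (φ : Euc d → EReal) (u : Euc d) : ℝ := (econj φ u).toReal

/-- Gradient `∇φ*` of the conjugate. -/
def gradconj {d : ℕ} (φ : Euc d → EReal) (u : Euc d) : Euc d := gradient (rconj φ) u

def ConvexE {d : ℕ} (φ : Euc d → EReal) : Prop :=
  ∀ x y : Euc d, ∀ t : ℝ, 0 < t → t < 1 →
    φ (t • x + (1 - t) • y) ≤ (t : EReal) * φ x + ((1 - t : ℝ) : EReal) * φ y

def StrictConvexOnE {d : ℕ} (φ : Euc d → EReal) (s : Set (Euc d)) : Prop :=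
  ∀ x ∈ s, ∀ y ∈ s, x ≠ y → ∀ t : ℝ, 0 < t → t < 1 →
    φ (t • x + (1 - t) • y) < (t : EReal) * φ x + ((1 - t : ℝ) : EReal) * φ y

def ProperE {d : ℕ} (φ : Euc d → EReal) : Prop :=
  (∃ x, φ x ≠ ⊤) ∧ ∀ x, φ x ≠ ⊥

/-- `φ(x)/‖x‖ → ∞` as `‖x‖ → ∞`. -/
def Supercoercive {d : ℕ} (φ : Euc d → EReal) : Prop :=
  ∀ M : ℝ, ∃ R : ℝ, ∀ x : Euc d, R ≤ ‖x‖ → ((M * ‖x‖ : ℝ) : EReal) ≤ φ x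

/-- Essential strict convexity: strict convexity on the relative interior of the domain. -/
def EssStrictConvexE {d : ℕ} (φ : Euc d → EReal) : Prop :=
  StrictConvexOnE φ (intrinsicInterior ℝ (edom φ))

/-- Standing assumptions on the distance generating function `φ` and constraint set `C`. -/
structure PhiAssump {d : ℕ} (φ : Euc d → EReal) (C : Set (Euc d)) : Prop where
  Cne : C.Nonempty
  Cconv : Convex ℝ C
  Ccl : IsClosed C
  proper : ProperE φ
  conv : ConvexE φ
  lsc : LowerSemicontinuous φ
  coercive : Supercoercive φ
  essstrict : EssStrictConvexE φ
  domC : closure (ddom φ) = C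
  ri_eq : ddom φ = intrinsicInterior ℝ (edom φ)

/-- Standing assumption (iv): Bregman distances tend to zero along convergent sequences. -/
def BregCont {d : ℕ} (φ : Euc d → EReal) : Prop :=
  ∀ x ∈ edom φ, ∀ xk : ℕ → Euc d, ∀ uk : ℕ → Euc d,
    (∀ k, uk k ∈ subdiff φ (xk k)) → Tendsto xk atTop (𝓝 x) →
    Tendsto (fun k => breg φ (uk k) (xk k) x) atTop (𝓝 (0 : EReal))

/-- `f` is continuously differentiable on `Dset ⊇ C`, with gradients `f'`. -/
structure FAssump {d n : ℕ} (f : Fin n → Euc d → ℝ) (f' : Fin n → Euc d → Euc d)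
    (Dset C : Set (Euc d)) : Prop where
  CsubD : C ⊆ Dset
  grad : ∀ i, ∀ x ∈ Dset, HasGradientAt (f i) (f' i x) x
  cont : ∀ i, ContinuousOn (f' i) Dset

/-- Solution set `S = C ∩ f⁻¹(0)`. -/
def solSet {d n : ℕ} (f : Fin n → Euc d → ℝ) (C : Set (Euc d)) : Set (Euc d) :=
  {x ∈ C | ∀ i, f i x = 0}

/-- `N` is a norm on `ℝ^d`. -/
def IsANorm {d : ℕ} (N : Euc d → ℝ) : Prop :=
  (∀ x, N x = 0 ↔ x = 0) ∧ (∀ (c : ℝ) (x : Euc d), N (c • x) = |c| * N x) ∧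
    ∀ x y : Euc d, N (x + y) ≤ N x + N y

/-- Dual norm of `N`. -/
def dualN {d : ℕ} (N : Euc d → ℝ) (u : Euc d) : ℝ :=
  sSup {r : ℝ | ∃ y : Euc d, N y ≤ 1 ∧ r = (rinn u y)}

/-- `φ` is `σ`-strongly convex w.r.t. the norm `N`. -/
def StronglyConvexWrt {d : ℕ} (φ : Euc d → EReal) (σ : ℝ) (N : Euc d → ℝ) : Prop :=
  ∀ x ∈ ddom φ, ∀ y ∈ ddom φ, ∀ u ∈ subdiff φ x,
    ((σ / 2 * (N (x - y)) ^ 2 : ℝ) : EReal) ≤ breg φ u x y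

/-- `φ` is `M`-smooth w.r.t. the norm `N`: finite everywhere (subdifferentiable everywhere)
with the quadratic upper bound. -/
def SmoothWrt {d : ℕ} (φ : Euc d → EReal) (M : ℝ) (N : Euc d → ℝ) : Prop :=
  (∀ x : Euc d, (subdiff φ x).Nonempty) ∧
    ∀ x y : Euc d, ∀ u ∈ subdiff φ x,
      breg φ u x y ≤ ((M / 2 * (N (x - y)) ^ 2 : ℝ) : EReal)

/-- `g` (with gradient `g'`) is star-convex. -/
def StarConvexWith {d : ℕ} (g : Euc d → ℝ) (g' : Euc d → Euc d) : Prop :=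
  (∃ z : Euc d, ∀ y, g z ≤ g y) ∧
    ∀ x z : Euc d, (∀ y, g z ≤ g y) → g x + rinn (g' x) (z - x) ≤ g z

/-- `g` (with gradient `g'`) is strictly star-convex. -/
def StrictStarConvexWith {d : ℕ} (g : Euc d → ℝ) (g' : Euc d → Euc d) : Prop :=
  (∃ z : Euc d, ∀ y, g z ≤ g y) ∧
    ∀ x z : Euc d, (∀ y, g z ≤ g y) → x ≠ z → g x + rinn (g' x) (z - x) < g z

/-- `g` is `μ`-strongly star-convex relative to `φ`. -/
def StronglyStarConvexRel {d : ℕ} (g : Euc d → ℝ) (g' : Euc d → Euc d) (μ : ℝ)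
    (φ : Euc d → EReal) : Prop :=
  (∃ z : Euc d, ∀ y, g z ≤ g y) ∧
    ∀ x : Euc d, ∀ u ∈ subdiff φ x, ∀ z : Euc d, (∀ y, g z ≤ g y) →
      ((g x + rinn (g' x) (z - x) : ℝ) : EReal) + (μ : EReal) * breg φ u x z ≤ (g z : EReal)

def IsAffineF {d : ℕ} (g : Euc d → ℝ) : Prop :=
  ∃ (a : Euc d) (b : ℝ), ∀ x, g x = (rinn a x) + b

/-- Assumption 2: each component is either nonnegative star-convex with a zero in `dom ∂φ`,
nonnegative strictly star-convex, or affine. -/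
def Assump2 {d n : ℕ} (φ : Euc d → EReal) (f : Fin n → Euc d → ℝ)
    (f' : Fin n → Euc d → Euc d) : Prop :=
  ∀ i : Fin n,
    ((∀ x, 0 ≤ f i x) ∧ StarConvexWith (f i) (f' i) ∧ ∃ z ∈ ddom φ, f i z = 0) ∨
    ((∀ x, 0 ≤ f i x) ∧ StrictStarConvexWith (f i) (f' i)) ∨
    IsAffineF (f i)

/-- `g` is `L`-smooth w.r.t. the norm `N` (quadratic upper bound). -/
def LSmoothWrt {d : ℕ} (g : Euc d → ℝ) (g' : Euc d → Euc d) (L : ℝ) (N : Euc d → ℝ) : Prop :=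
  ∀ x y : Euc d, g y ≤ g x + rinn (g' x) (y - x) + L / 2 * (N (x - y)) ^ 2

/-- Hyperplane given by the linearization of `f i` at `x`. -/
def linHyp {d n : ℕ} (f : Fin n → Euc d → ℝ) (f' : Fin n → Euc d → Euc d)
    (i : Fin n) (x : Euc d) : Set (Euc d) :=
  {y | f i x + rinn (f' i x) (y - x) = 0}

/-- Objective of the one-dimensional dual problem defining the exact NBK step size. -/
def lineObj {d n : ℕ} (φ : Euc d → EReal) (f : Fin n → Euc d → ℝ)
    (f' : Fin n → Euc d → Euc d) (i : Fin n) (x u : Euc d) (t : ℝ) : ℝ :=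
  rconj φ (u - t • f' i x) + t * (rinn (f' i x) x - f i x)

/-- Local tangential cone condition with constant `η` on `U`. -/
def TCCOn {d : ℕ} (g : Euc d → ℝ) (g' : Euc d → Euc d) (η : ℝ) (U : Set (Euc d)) : Prop :=
  ∀ x ∈ U, ∀ y ∈ U, |g x + rinn (g' x) (y - x) - g y| ≤ η * |g x - g y|

/-- The set `B_{r,φ}(z)`. -/
def BregBall {d : ℕ} (φ : Euc d → EReal) (C : Set (Euc d)) (r : ℝ) (z : Euc d) :
    Set (Euc d) :=
  {x ∈ C | ∀ u ∈ subdiff φ x, breg φ u x z ≤ (r : EReal)}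

end

/-!
Under the standing assumptions every `v` is a subgradient of `φ` at exactly one point, and that
point is `∇φ*(v)`; Fenchel–Young then gives `D_φ^{v}(∇φ*(v), z) = φ(z) + φ*(v) - ⟨v, z⟩`.
Along the ray `v(t) = u - t ∇f_i(x)` this is the line objective `φ*(v(t)) + t β` up to the
constant `φ(z) - ⟨u, z⟩` and the term `t (⟨∇f_i(x), z⟩ - β)`, whose slope is `≤ 0` for every
solution `z` by (star-)convexity of `f_i`. As the line objective is minimal at `t_k`, the distance
at `t_k` is at most the distance at any `t ≤ t_k`. For the relaxed step, the optimality condition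
at `t_k` reads `⟨∇f_i(x), x - ∇φ*(v(t_k))⟩ = f_i(x)`, and σ-strong monotonicity of `∂φ` turns it
into `t_{k,σ} ≤ t_k`.
-/

lemma LowerSemicontinuous.le_of_tendsto {α β ι : Type*} [TopologicalSpace α] [LinearOrder β]
    [TopologicalSpace β] [OrderTopology β] [DenselyOrdered β] {l : Filter ι} [l.NeBot]
    {φ : α → β} (hφ : LowerSemicontinuous φ) {xs : ι → α} {y : α} (hx : Tendsto xs l (𝓝 y))
    {rs : ι → β} {L : β} (hr : Tendsto rs l (𝓝 L)) (hle : ∀ᶠ k in l, φ (xs k) ≤ rs k) :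
    φ y ≤ L := by
  by_contra! hLy
  obtain ⟨c, hLc, hcy⟩ := exists_between hLy
  obtain ⟨k, hk, hrk, hck⟩ :=
    (hle.and ((hr.eventually (gt_mem_nhds hLc)).and (hx.eventually (hφ y c hcy)))).exists
  exact (hck.trans_le hk).not_gt hrk

section Inner

variable {d : ℕ}

@[simp] lemma rinn_zero_right (a : Euc d) : rinn a 0 = 0 := inner_zero_right a

lemma rinn_add_right (a b c : Euc d) : rinn a (b + c) = rinn a b + rinn a c :=
  inner_add_right a b c

lemma rinn_sub_left (a b c : Euc d) : rinn (a - b) c = rinn a c - rinn b c :=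
  inner_sub_left a b c

lemma rinn_sub_right (a b c : Euc d) : rinn a (b - c) = rinn a b - rinn a c :=
  inner_sub_right a b c

lemma rinn_smul_left (t : ℝ) (a b : Euc d) : rinn (t • a) b = t * rinn a b :=
  real_inner_smul_left a b t

lemma rinn_smul_right (t : ℝ) (a b : Euc d) : rinn a (t • b) = t * rinn a b :=
  real_inner_smul_right a b t

lemma rinn_le_norm_mul_norm (a b : Euc d) : rinn a b ≤ ‖a‖ * ‖b‖ := real_inner_le_norm a b

end Inner

section Subdifferential

variable {d : ℕ} {φ : Euc d → EReal} {v w x y : Euc d}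

lemma ProperE.coe_toReal (hφ : ProperE φ) (hx : φ x ≠ ⊤) : ((φ x).toReal : EReal) = φ x :=
  EReal.coe_toReal hx (hφ.2 x)

lemma toReal_add_rinn_le_of_mem_subdiff (hφ : ProperE φ) (hv : v ∈ subdiff φ x)
    (hy : φ y ≠ ⊤) : (φ x).toReal + rinn v (y - x) ≤ (φ y).toReal := by
  have h := hv.2 y
  rwa [← hφ.coe_toReal hv.1, ← hφ.coe_toReal hy, ← EReal.coe_add, EReal.coe_le_coe_iff] at h

lemma econj_eq_of_mem_subdiff (hφ : ProperE φ) (hv : v ∈ subdiff φ x) :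
    econj φ v = ((rinn v x - (φ x).toReal : ℝ) : EReal) := by
  refine le_antisymm (iSup_le fun y => ?_) ?_
  · rcases eq_or_ne (φ y) ⊤ with hy | hy
    · simp [hy]
    · have h := toReal_add_rinn_le_of_mem_subdiff hφ hv hy
      rw [rinn_sub_right] at h
      rw [← hφ.coe_toReal hy, ← EReal.coe_sub, EReal.coe_le_coe_iff]
      linarith
  · have h := le_iSup (fun y => ((rinn v y : ℝ) : EReal) - φ y) x
    rwa [← hφ.coe_toReal hv.1, ← EReal.coe_sub] at h

lemma rconj_eq_of_mem_subdiff (hφ : ProperE φ) (hv : v ∈ subdiff φ x) :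
    rconj φ v = rinn v x - (φ x).toReal := by
  rw [rconj, econj_eq_of_mem_subdiff hφ hv, EReal.toReal_coe]

lemma rconj_add_rinn_le_of_mem_subdiff (hφ : ProperE φ) (hv : v ∈ subdiff φ x)
    (hw : w ∈ subdiff φ y) : rconj φ v + rinn (w - v) x ≤ rconj φ w := by
  have h := toReal_add_rinn_le_of_mem_subdiff hφ hw hv.1
  rw [rconj_eq_of_mem_subdiff hφ hv, rconj_eq_of_mem_subdiff hφ hw]
  rw [rinn_sub_right] at h
  rw [rinn_sub_left]
  linarith

lemma breg_eq_of_mem_subdiff (hφ : ProperE φ) (hv : v ∈ subdiff φ x) (z : Euc d) :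
    breg φ v x z = φ z - ((rinn v z - rconj φ v : ℝ) : EReal) := by
  rw [breg, ← hφ.coe_toReal hv.1, rconj_eq_of_mem_subdiff hφ hv]
  induction φ z with
  | bot => simp only [EReal.bot_sub]
  | top => simp only [EReal.top_sub_coe]
  | coe a =>
    rw [← EReal.coe_sub, ← EReal.coe_sub, ← EReal.coe_sub, rinn_sub_right]
    ring_nf

lemma breg_le_breg_of_mem_subdiff (hφ : ProperE φ) (hv : v ∈ subdiff φ x)
    (hw : w ∈ subdiff φ y) {z : Euc d} (h : rconj φ v - rinn v z ≤ rconj φ w - rinn w z) :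
    breg φ v x z ≤ breg φ w y z := by
  rw [breg_eq_of_mem_subdiff hφ hv, breg_eq_of_mem_subdiff hφ hw]
  exact EReal.sub_le_sub le_rfl (EReal.coe_le_coe_iff.2 (by linarith))

lemma StrictConvexOnE.eq_of_mem_subdiff (hstrict : StrictConvexOnE φ (ddom φ))
    (hφ : ProperE φ) (hx : v ∈ subdiff φ x) (hy : v ∈ subdiff φ y) : x = y := by
  by_contra hne
  set m : Euc d := (1 / 2 : ℝ) • x + (1 - 1 / 2 : ℝ) • y
  have hlt := hstrict x ⟨v, hx⟩ y ⟨v, hy⟩ hne (1 / 2) (by norm_num) (by norm_num)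
  rw [← hφ.coe_toReal hx.1, ← hφ.coe_toReal hy.1, ← EReal.coe_mul, ← EReal.coe_mul,
    ← EReal.coe_add] at hlt
  have hm : φ m ≠ ⊤ := ne_top_of_lt hlt
  rw [← hφ.coe_toReal hm, EReal.coe_lt_coe_iff] at hlt
  have hx' := toReal_add_rinn_le_of_mem_subdiff hφ hx hm
  have hy' := toReal_add_rinn_le_of_mem_subdiff hφ hy hm
  have hsum : rinn v (m - x) + rinn v (m - y) = 0 := by
    rw [← rinn_add_right, show m - x + (m - y) = 0 by simp only [m]; module, rinn_zero_right]
  linarith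

end Subdifferential

section Conjugate

variable {d : ℕ} {φ : Euc d → EReal}

lemma Supercoercive.mul_norm_le_toReal (hcoer : Supercoercive φ) (M : ℝ) :
    ∃ R, ∀ x, R ≤ ‖x‖ → φ x ≠ ⊤ → M * ‖x‖ ≤ (φ x).toReal := by
  obtain ⟨R, hR⟩ := hcoer M
  refine ⟨R, fun x hx hfin => ?_⟩
  have h := hR x hx
  rw [← EReal.coe_toReal hfin (ne_bot_of_le_ne_bot (EReal.coe_ne_bot _) h)] at h
  exact_mod_cast h

lemma mem_subdiff_of_forall_le (hφ : ProperE φ) {v x : Euc d} (hx : φ x ≠ ⊤)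
    (hmin : ∀ y, φ x + ((-rinn v x : ℝ) : EReal) ≤ φ y + ((-rinn v y : ℝ) : EReal)) :
    v ∈ subdiff φ x := by
  refine ⟨hx, fun y => ?_⟩
  rcases eq_or_ne (φ y) ⊤ with hy | hy
  · simp [hy]
  have h := hmin y
  rw [← hφ.coe_toReal hx, ← hφ.coe_toReal hy, ← EReal.coe_add, ← EReal.coe_add,
    EReal.coe_le_coe_iff] at h
  rw [← hφ.coe_toReal hx, ← hφ.coe_toReal hy, ← EReal.coe_add, EReal.coe_le_coe_iff,
    rinn_sub_right]
  linarith

/-- Minimising the lower semicontinuous `φ - ⟨v, ·⟩` over a large ball gives a global minimiser,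
since supercoercivity makes it exceed `‖·‖` far out. -/
lemma exists_mem_subdiff (hφ : ProperE φ) (hlsc : LowerSemicontinuous φ)
    (hcoer : Supercoercive φ) (v : Euc d) : ∃ x, v ∈ subdiff φ x := by
  set ψ : Euc d → EReal := fun y => φ y + ((-rinn v y : ℝ) : EReal)
  have hψ : ∀ y, ψ y = φ y + ((-rinn v y : ℝ) : EReal) := fun y => rfl
  have hψlsc : LowerSemicontinuous ψ := by
    refine hlsc.add' (continuous_coe_real_ereal.comp ?_).lowerSemicontinuous
      fun y => EReal.continuousAt_add (Or.inr (EReal.coe_ne_bot _)) (Or.inr (EReal.coe_ne_top _))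
    exact (continuous_const.inner continuous_id).neg
  obtain ⟨x₀, hx₀⟩ := hφ.1
  obtain ⟨R, hR⟩ := hcoer (‖v‖ + 1)
  set r := max R (max ‖x₀‖ ((φ x₀).toReal - rinn v x₀))
  have hx₀ball : x₀ ∈ Metric.closedBall (0 : Euc d) r := by
    simp [r]
  obtain ⟨x, hxball, hxmin⟩ := (hψlsc.lowerSemicontinuousOn _).exists_isMinOn ⟨x₀, hx₀ball⟩
    (isCompact_closedBall 0 r)
  have hψx₀ : ψ x₀ = (((φ x₀).toReal - rinn v x₀ : ℝ) : EReal) := by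
    rw [hψ, sub_eq_add_neg, EReal.coe_add, hφ.coe_toReal hx₀]
  have hglobal : ∀ y, ψ x ≤ ψ y := by
    intro y
    by_cases hy : ‖y‖ ≤ r
    · exact hxmin (by simpa using hy)
    have hfar : (((‖v‖ + 1) * ‖y‖ - rinn v y : ℝ) : EReal) ≤ ψ y := by
      rw [hψ, sub_eq_add_neg, EReal.coe_add]
      exact add_le_add (hR y ((le_max_left _ _).trans (not_le.1 hy).le)) le_rfl
    refine (hxmin hx₀ball).trans (hψx₀.trans_le (le_trans ?_ hfar))
    have hvy := rinn_le_norm_mul_norm v y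
    have hx₀r : (φ x₀).toReal - rinn v x₀ ≤ r := (le_max_right _ _).trans (le_max_right _ _)
    exact EReal.coe_le_coe_iff.2 (by nlinarith [norm_nonneg y, not_le.1 hy])
  have hx : φ x ≠ ⊤ := by
    intro h
    have htop : ψ x = ⊤ := by rw [hψ, h, EReal.top_add_coe]
    exact EReal.coe_ne_top _ (top_le_iff.1 (htop ▸ (hglobal x₀).trans_eq hψx₀))
  exact ⟨x, mem_subdiff_of_forall_le hφ hx hglobal⟩

lemma exists_norm_le_of_mem_subdiff (hφ : ProperE φ) (hcoer : Supercoercive φ) (K : ℝ) :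
    ∃ B, ∀ v x, ‖v‖ ≤ K → v ∈ subdiff φ x → ‖x‖ ≤ B := by
  obtain ⟨x₀, hx₀⟩ := hφ.1
  obtain ⟨R, hR⟩ := hcoer.mul_norm_le_toReal (K + 1)
  refine ⟨max R (K * ‖x₀‖ + (φ x₀).toReal), fun v x hv hsub => ?_⟩
  rcases le_or_gt ‖x‖ R with hxR | hxR
  · exact hxR.trans (le_max_left _ _)
  have hcoerx := hR x hxR.le hsub.1
  have hsubx := toReal_add_rinn_le_of_mem_subdiff hφ hsub hx₀
  have hinner : -(‖v‖ * ‖x₀ - x‖) ≤ rinn v (x₀ - x) :=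
    neg_le_of_abs_le (abs_real_inner_le_norm v (x₀ - x))
  have hdist : ‖v‖ * ‖x₀ - x‖ ≤ K * (‖x₀‖ + ‖x‖) :=
    mul_le_mul hv (norm_sub_le _ _) (norm_nonneg _) ((norm_nonneg v).trans hv)
  exact le_max_of_le_right (by linarith)

lemma mem_subdiff_of_tendsto (hφ : ProperE φ) (hlsc : LowerSemicontinuous φ)
    {xs vs : ℕ → Euc d} {x v : Euc d} (hx : Tendsto xs atTop (𝓝 x))
    (hv : Tendsto vs atTop (𝓝 v)) (hmem : ∀ k, vs k ∈ subdiff φ (xs k)) :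
    v ∈ subdiff φ x := by
  have hle : ∀ y, φ y ≠ ⊤ → φ x ≤ (((φ y).toReal - rinn v (y - x) : ℝ) : EReal) := by
    intro y hy
    refine hlsc.le_of_tendsto hx (continuous_coe_real_ereal.continuousAt.tendsto.comp
      (tendsto_const_nhds.sub (hv.inner (tendsto_const_nhds.sub hx))))
      (Eventually.of_forall fun k => ?_)
    rw [Function.comp_apply, ← hφ.coe_toReal (hmem k).1, EReal.coe_le_coe_iff]
    have := toReal_add_rinn_le_of_mem_subdiff hφ (hmem k) hy
    simp only [rinn] at this ⊢
    linarith
  obtain ⟨x₀, hx₀⟩ := hφ.1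
  have hx : φ x ≠ ⊤ := ne_top_of_le_ne_top (EReal.coe_ne_top _) (hle x₀ hx₀)
  refine ⟨hx, fun y => ?_⟩
  rcases eq_or_ne (φ y) ⊤ with hy | hy
  · simp [hy]
  have h := hle y hy
  rw [← hφ.coe_toReal hx, EReal.coe_le_coe_iff] at h
  rw [← hφ.coe_toReal hx, ← hφ.coe_toReal hy, ← EReal.coe_add, EReal.coe_le_coe_iff]
  linarith

end Conjugate

section GradientOfConjugate

variable {d : ℕ} {φ : Euc d → EReal}

/-- `(∂φ)⁻¹(v)`, which is `∇φ*(v)` under the standing assumptions. -/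
noncomputable def subdiffInv (φ : Euc d → EReal) (v : Euc d) : Euc d :=
  Classical.epsilon fun x => v ∈ subdiff φ x

lemma mem_subdiff_subdiffInv (hφ : ProperE φ) (hlsc : LowerSemicontinuous φ)
    (hcoer : Supercoercive φ) (v : Euc d) : v ∈ subdiff φ (subdiffInv φ v) :=
  Classical.epsilon_spec (exists_mem_subdiff hφ hlsc hcoer v)

lemma subdiffInv_eq_of_mem_subdiff (hφ : ProperE φ) (hstrict : StrictConvexOnE φ (ddom φ))
    {v x : Euc d} (hv : v ∈ subdiff φ x) : subdiffInv φ v = x :=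
  hstrict.eq_of_mem_subdiff hφ (Classical.epsilon_spec (p := fun y => v ∈ subdiff φ y) ⟨x, hv⟩) hv

lemma continuous_subdiffInv (hφ : ProperE φ) (hlsc : LowerSemicontinuous φ)
    (hcoer : Supercoercive φ) (hstrict : StrictConvexOnE φ (ddom φ)) :
    Continuous (subdiffInv φ) := by
  have hmem := mem_subdiff_subdiffInv hφ hlsc hcoer
  refine continuous_iff_seqContinuous.2 fun {vs v} hvs => ?_
  obtain ⟨K, hK⟩ := isBounded_iff_forall_norm_le.1 (Metric.isBounded_range_of_tendsto vs hvs)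
  obtain ⟨B, hB⟩ := exists_norm_le_of_mem_subdiff hφ hcoer K
  have hball : ∀ k, subdiffInv φ (vs k) ∈ Metric.closedBall (0 : Euc d) B := fun k => by
    simpa using hB _ _ (hK _ ⟨k, rfl⟩) (hmem (vs k))
  refine tendsto_of_subseq_tendsto fun ns hns => ?_
  obtain ⟨y, -, ms, hms, hy⟩ := (isCompact_closedBall (0 : Euc d) B).tendsto_subseq
    fun n => hball (ns n)
  have hv : v ∈ subdiff φ y :=
    mem_subdiff_of_tendsto hφ hlsc hy (hvs.comp (hns.comp hms.tendsto_atTop)) fun n => hmem _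
  exact ⟨ms, subdiffInv_eq_of_mem_subdiff hφ hstrict hv ▸ hy⟩

/-- Danskin: `φ*(v + h) - φ*(v) - ⟨∇φ*(v), h⟩` lies between `0` and
`⟨h, ∇φ*(v + h) - ∇φ*(v)⟩`, which is `o(‖h‖)` by continuity of `∇φ*`. -/
lemma hasGradientAt_rconj (hφ : ProperE φ) (hlsc : LowerSemicontinuous φ)
    (hcoer : Supercoercive φ) (hstrict : StrictConvexOnE φ (ddom φ)) (v : Euc d) :
    HasGradientAt (rconj φ) (subdiffInv φ v) v := by
  have hmem := mem_subdiff_subdiffInv hφ hlsc hcoer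
  have hcont : Tendsto (fun h => subdiffInv φ (v + h)) (𝓝 0) (𝓝 (subdiffInv φ v)) :=
    ((continuous_subdiffInv hφ hlsc hcoer hstrict).comp
      (continuous_const.add continuous_id)).tendsto' 0 _ (by simp)
  rw [hasGradientAt_iff_hasFDerivAt, hasFDerivAt_iff_isLittleO_nhds_zero,
    Asymptotics.isLittleO_iff]
  intro c hc
  filter_upwards [hcont.eventually (Metric.closedBall_mem_nhds _ hc)] with h hh
  have hlow := rconj_add_rinn_le_of_mem_subdiff hφ (hmem v) (hmem (v + h))
  have hupp := rconj_add_rinn_le_of_mem_subdiff hφ (hmem (v + h)) (hmem v)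
  have hdiff := rinn_le_norm_mul_norm h (subdiffInv φ (v + h) - subdiffInv φ v)
  rw [dist_eq_norm] at hh
  rw [add_sub_cancel_left] at hlow
  rw [sub_add_cancel_left] at hupp
  rw [InnerProductSpace.toDual_apply_apply, Real.norm_eq_abs, abs_le]
  simp only [rinn, inner_sub_right, inner_neg_left] at hlow hupp hdiff
  rw [real_inner_comm]
  constructor <;> nlinarith [norm_nonneg h, mul_le_mul_of_nonneg_left hh (norm_nonneg h)]

lemma gradconj_eq_subdiffInv (hφ : ProperE φ) (hlsc : LowerSemicontinuous φ)
    (hcoer : Supercoercive φ) (hstrict : StrictConvexOnE φ (ddom φ)) (v : Euc d) :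
    gradconj φ v = subdiffInv φ v :=
  (hasGradientAt_rconj hφ hlsc hcoer hstrict v).gradient

end GradientOfConjugate

namespace IsANorm

variable {d : ℕ} {N : Euc d → ℝ}

lemma map_zero (hN : IsANorm N) : N 0 = 0 := (hN.1 0).2 rfl

lemma map_neg (hN : IsANorm N) (x : Euc d) : N (-x) = N x := by
  simpa using hN.2.1 (-1) x

lemma nonneg (hN : IsANorm N) (x : Euc d) : 0 ≤ N x := by
  have h := hN.2.2 x (-x)
  rw [add_neg_cancel, hN.map_zero, hN.map_neg] at h
  linarith

lemma convexOn (hN : IsANorm N) : ConvexOn ℝ univ N := by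
  refine ⟨convex_univ, fun x _ y _ a b ha hb _ => ?_⟩
  calc N (a • x + b • y) ≤ N (a • x) + N (b • y) := hN.2.2 _ _
    _ = a * N x + b * N y := by rw [hN.2.1, hN.2.1, abs_of_nonneg ha, abs_of_nonneg hb]

lemma continuous (hN : IsANorm N) : Continuous N :=
  continuousOn_univ.1 (hN.convexOn.continuousOn isOpen_univ)

/-- Take the minimum of `N` on the Euclidean unit sphere (empty only when `d = 0`). -/
lemma exists_pos_mul_norm_le (hN : IsANorm N) : ∃ c > 0, ∀ x : Euc d, c * ‖x‖ ≤ N x := by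
  have hunit : ∀ x : Euc d, x ≠ 0 → ‖x‖⁻¹ • x ∈ Metric.sphere (0 : Euc d) 1 := fun x hx => by
    simp [norm_smul, inv_mul_cancel₀ (norm_ne_zero_iff.2 hx)]
  rcases (Metric.sphere (0 : Euc d) 1).eq_empty_or_nonempty with hempty | hne
  · refine ⟨1, one_pos, fun x => ?_⟩
    obtain rfl | hx := eq_or_ne x 0
    · simp [hN.map_zero]
    · exact absurd (hunit x hx) (hempty ▸ notMem_empty _)
  obtain ⟨x₀, hx₀, hmin⟩ := (isCompact_sphere (0 : Euc d) 1).exists_isMinOn hne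
    hN.continuous.continuousOn
  have hx₀ne : x₀ ≠ 0 := ne_zero_of_mem_unit_sphere ⟨x₀, hx₀⟩
  refine ⟨N x₀, (hN.nonneg x₀).lt_of_ne (fun h => hx₀ne ((hN.1 x₀).1 h.symm)), fun x => ?_⟩
  obtain rfl | hx := eq_or_ne x 0
  · simp [hN.map_zero]
  have hpos : 0 < ‖x‖ := norm_pos_iff.2 hx
  have h := hmin (hunit x hx)
  rw [mem_ofPred_eq, hN.2.1, abs_of_pos (inv_pos.2 hpos)] at h
  calc N x₀ * ‖x‖ ≤ ‖x‖⁻¹ * N x * ‖x‖ := mul_le_mul_of_nonneg_right h hpos.le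
    _ = N x := by field_simp

lemma bddAbove_rinn (hN : IsANorm N) (a : Euc d) :
    BddAbove {r : ℝ | ∃ y : Euc d, N y ≤ 1 ∧ r = rinn a y} := by
  obtain ⟨c, hc, hcN⟩ := hN.exists_pos_mul_norm_le
  refine ⟨‖a‖ / c, ?_⟩
  rintro _ ⟨y, hy, rfl⟩
  rw [le_div_iff₀ hc]
  nlinarith [rinn_le_norm_mul_norm a y, hcN y, norm_nonneg a, norm_nonneg y]

lemma rinn_le_dualN_mul (hN : IsANorm N) (a w : Euc d) : rinn a w ≤ dualN N a * N w := by
  rcases (hN.nonneg w).eq_or_lt with h | hpos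
  · simp [(hN.1 w).1 h.symm, hN.map_zero]
  have hle : rinn a ((N w)⁻¹ • w) ≤ dualN N a := by
    refine le_csSup (hN.bddAbove_rinn a) ⟨(N w)⁻¹ • w, ?_, rfl⟩
    rw [hN.2.1, abs_of_pos (inv_pos.2 hpos), inv_mul_cancel₀ hpos.ne']
  rw [rinn_smul_right, inv_mul_le_iff₀ hpos] at hle
  linarith

end IsANorm

section StepSize

variable {d : ℕ} {φ : Euc d → EReal}

lemma StronglyConvexWrt.mul_sq_le_rinn {σ : ℝ} {N : Euc d → ℝ}
    (hsc : StronglyConvexWrt φ σ N) (hφ : ProperE φ) (hN : IsANorm N) {v w x y : Euc d}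
    (hv : v ∈ subdiff φ x) (hw : w ∈ subdiff φ y) :
    σ * N (x - y) ^ 2 ≤ rinn (v - w) (x - y) := by
  have hxy := hsc x ⟨v, hv⟩ y ⟨w, hw⟩ v hv
  have hyx := hsc y ⟨w, hw⟩ x ⟨v, hv⟩ w hw
  rw [breg, ← hφ.coe_toReal hv.1, ← hφ.coe_toReal hw.1, ← EReal.coe_sub, ← EReal.coe_sub,
    EReal.coe_le_coe_iff] at hxy hyx
  rw [← neg_sub, hN.map_neg] at hyx
  rw [rinn_sub_left, rinn_sub_right, rinn_sub_right] at *
  linarith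

/-- Strong monotonicity of `∂φ` gives `σ ‖x - p‖² ≤ t c`, while `c ≤ ‖g‖_* ‖x - p‖`. -/
lemma mul_div_dualN_sq_le {σ : ℝ} {N : Euc d → ℝ} (hφ : ProperE φ)
    (hsc : StronglyConvexWrt φ σ N) (hN : IsANorm N) (hσ : 0 < σ) {u g x p : Euc d} {t c : ℝ}
    (hu : u ∈ subdiff φ x) (hp : u - t • g ∈ subdiff φ p) (hc : 0 < c)
    (hgc : rinn g (x - p) = c) : σ * c / dualN N g ^ 2 ≤ t := by
  have hmono := hsc.mul_sq_le_rinn hφ hN hu hp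
  rw [sub_sub_cancel, rinn_smul_left, hgc] at hmono
  have hdual : c ≤ dualN N g * N (x - p) := hgc ▸ hN.rinn_le_dualN_mul g (x - p)
  have hsq : σ * c ^ 2 ≤ σ * (dualN N g * N (x - p)) ^ 2 :=
    mul_le_mul_of_nonneg_left (pow_le_pow_left₀ hc.le hdual 2) hσ.le
  have hkey : σ * c ≤ dualN N g ^ 2 * t := by nlinarith
  have hL : 0 < dualN N g ^ 2 := by
    by_contra! h
    nlinarith [sq_nonneg (dualN N g), mul_pos hσ hc]
  rwa [div_le_iff₀ hL, mul_comm t]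

end StepSize

section Linearization

variable {d : ℕ} {g : Euc d → ℝ} {g' : Euc d → Euc d}

lemma StrictStarConvexWith.starConvexWith (h : StrictStarConvexWith g g') :
    StarConvexWith g g' := by
  refine ⟨h.1, fun x z hz => ?_⟩
  obtain rfl | hxz := eq_or_ne x z
  · simp
  · exact (h.2 x z hz hxz).le

lemma StarConvexWith.add_rinn_sub_nonpos (h : StarConvexWith g g') (hnonneg : ∀ y, 0 ≤ g y)
    {z : Euc d} (hz : g z = 0) (x : Euc d) : g x + rinn (g' x) (z - x) ≤ 0 :=
  hz ▸ h.2 x z fun y => hz ▸ hnonneg y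

lemma IsAffineF.add_rinn_sub_eq (h : IsAffineF g) {a x : Euc d} (hg : HasGradientAt g a x)
    (y : Euc d) : g x + rinn a (y - x) = g y := by
  obtain ⟨b, β, hb⟩ := h
  have hgb : HasGradientAt g b x := by
    rw [show g = fun y => inner ℝ b y + β from funext hb, hasGradientAt_iff_hasFDerivAt]
    exact ((InnerProductSpace.toDual ℝ (Euc d) b).hasFDerivAt).add_const β
  rw [hg.unique hgb, hb, hb, rinn_sub_right]
  ring

lemma Assump2.add_rinn_sub_nonpos {n : ℕ} {φ : Euc d → EReal} {f : Fin n → Euc d → ℝ}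
    {f' : Fin n → Euc d → Euc d} (hA2 : Assump2 φ f f') {i : Fin n} {x z : Euc d}
    (hgrad : HasGradientAt (f i) (f' i x) x) (hz : f i z = 0) :
    f i x + rinn (f' i x) (z - x) ≤ 0 := by
  rcases hA2 i with ⟨hnonneg, hstar, -⟩ | ⟨hnonneg, hstrict⟩ | haff
  · exact hstar.add_rinn_sub_nonpos hnonneg hz x
  · exact hstrict.starConvexWith.add_rinn_sub_nonpos hnonneg hz x
  · exact (haff.add_rinn_sub_eq hgrad z).trans_le hz.le

end Linearization

section ExactStep

variable {d n : ℕ} {φ : Euc d → EReal} {f : Fin n → Euc d → ℝ} {f' : Fin n → Euc d → Euc d}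
  {i : Fin n} {x u : Euc d} {tk : ℝ}

/-- With `β = ⟨∇f_i(x), x⟩ - f_i(x)`, `φ*(u - t∇f_i(x)) - ⟨u - t∇f_i(x), z⟩` equals the line
objective minus `⟨u, z⟩` plus `t (⟨∇f_i(x), z⟩ - β)`, and `⟨∇f_i(x), z⟩ - β ≤ 0` is `hz`. -/
lemma rconj_sub_rinn_le_of_isMin
    (hmin : ∀ s, lineObj φ f f' i x u tk ≤ lineObj φ f f' i x u s) {t : ℝ} (ht : t ≤ tk)
    {z : Euc d} (hz : f i x + rinn (f' i x) (z - x) ≤ 0) :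
    rconj φ (u - tk • f' i x) - rinn (u - tk • f' i x) z ≤
      rconj φ (u - t • f' i x) - rinn (u - t • f' i x) z := by
  have hline := hmin t
  simp only [lineObj] at hline
  simp only [rinn_sub_left, rinn_smul_left, rinn_sub_right] at hz ⊢
  nlinarith [mul_nonneg (sub_nonneg.2 ht) (neg_nonneg.2 hz)]

lemma hasDerivAt_lineObj (hφ : ProperE φ) (hlsc : LowerSemicontinuous φ)
    (hcoer : Supercoercive φ) (hstrict : StrictConvexOnE φ (ddom φ)) (s : ℝ) :
    HasDerivAt (lineObj φ f f' i x u)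
      (rinn (f' i x) (x - subdiffInv φ (u - s • f' i x)) - f i x) s := by
  have hray : HasDerivAt (fun t : ℝ => u - t • f' i x) (-f' i x) s := by
    simpa using ((hasDerivAt_id s).smul_const (f' i x)).const_sub u
  have hconj := (hasGradientAt_iff_hasFDerivAt.1
    (hasGradientAt_rconj hφ hlsc hcoer hstrict (u - s • f' i x))).comp_hasDerivAt s hray
  refine (hconj.add (hasDerivAt_mul_const (rinn (f' i x) x - f i x))).congr_deriv ?_
  simp only [InnerProductSpace.toDual_apply_apply, rinn, inner_neg_right, inner_sub_right,
    real_inner_comm (f' i x)]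
  ring

lemma rinn_sub_subdiffInv_eq_of_isMin (hφ : ProperE φ) (hlsc : LowerSemicontinuous φ)
    (hcoer : Supercoercive φ) (hstrict : StrictConvexOnE φ (ddom φ))
    (hmin : ∀ s, lineObj φ f f' i x u tk ≤ lineObj φ f f' i x u s) :
    rinn (f' i x) (x - subdiffInv φ (u - tk • f' i x)) = f i x :=
  sub_eq_zero.1 (IsLocalMin.hasDerivAt_eq_zero (Eventually.of_forall hmin)
    (hasDerivAt_lineObj hφ hlsc hcoer hstrict tk))

end ExactStep

theorem statement9_general {d n : ℕ} (φ : Euc d → EReal) (C Dset : Set (Euc d))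
    (f : Fin n → Euc d → ℝ) (f' : Fin n → Euc d → Euc d)
    (hφ : PhiAssump φ C) (hf : FAssump f f' Dset C)
    (hA2 : Assump2 φ f f')
    (x u : Euc d) (hu : u ∈ subdiff φ x)
    (i : Fin n) (hfpos : 0 < f i x)
    (tk : ℝ) (htk : ∀ s : ℝ, lineObj φ f f' i x u tk ≤ lineObj φ f f' i x u s)
    (u' x' : Euc d) (hu' : u' = u - tk • f' i x) (hx' : x' = gradconj φ u') :
    (∀ t : ℝ, 0 ≤ t → t ≤ tk → ∀ z ∈ solSet f C,
        breg φ u' x' z ≤ breg φ (u - t • f' i x) (gradconj φ (u - t • f' i x)) z) ∧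
    ∀ (σ : ℝ) (N : Euc d → ℝ), 0 < σ → IsANorm N → StronglyConvexWrt φ σ N →
      ∀ z ∈ solSet f C,
        breg φ u' x' z ≤
          breg φ (u - (σ * f i x / (dualN N (f' i x)) ^ 2) • f' i x)
            (gradconj φ (u - (σ * f i x / (dualN N (f' i x)) ^ 2) • f' i x)) z := by
  subst hu' hx'
  have hstrict : StrictConvexOnE φ (ddom φ) := hφ.ri_eq ▸ hφ.essstrict
  have hmem := mem_subdiff_subdiffInv hφ.proper hφ.lsc hφ.coercive
  have hxD : x ∈ Dset := hf.CsubD (hφ.domC ▸ subset_closure ⟨u, hu⟩)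
  have hcompare : ∀ t ≤ tk, ∀ z ∈ solSet f C,
      breg φ (u - tk • f' i x) (gradconj φ (u - tk • f' i x)) z ≤
        breg φ (u - t • f' i x) (gradconj φ (u - t • f' i x)) z := fun t ht z hz => by
    simp only [gradconj_eq_subdiffInv hφ.proper hφ.lsc hφ.coercive hstrict]
    exact breg_le_breg_of_mem_subdiff hφ.proper (hmem _) (hmem _)
      (rconj_sub_rinn_le_of_isMin htk ht (hA2.add_rinn_sub_nonpos (hf.grad i x hxD) (hz.2 i)))
  refine ⟨fun t _ ht => hcompare t ht, fun σ N hσ hN hsc => hcompare _ ?_⟩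
  exact mul_div_dualN_sq_le hφ.proper hsc hN hσ hu (hmem _) hfpos
    (rinn_sub_subdiffInv_eq_of_isMin hφ.proper hφ.lsc hφ.coercive hstrict htk)

/-- Theorem: the exact Bregman projection step moves at least as close, in
Bregman distance, to every solution as any smaller step; in particular as the relaxed step. -/
theorem statement9 {d n : ℕ} (φ : Euc d → EReal) (C Dset : Set (Euc d))
    (f : Fin n → Euc d → ℝ) (f' : Fin n → Euc d → Euc d)
    (hφ : PhiAssump φ C) (hf : FAssump f f' Dset C) (hS : (solSet f C).Nonempty)
    (hA2 : Assump2 φ f f')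
    (x u : Euc d) (hu : u ∈ subdiff φ x)
    (i : Fin n) (hfpos : 0 < f i x) (hf'0 : f' i x ≠ 0)
    (tk : ℝ) (htk : ∀ s : ℝ, lineObj φ f f' i x u tk ≤ lineObj φ f f' i x u s)
    (u' x' : Euc d) (hu' : u' = u - tk • f' i x) (hx' : x' = gradconj φ u') :
    (∀ t : ℝ, 0 ≤ t → t ≤ tk → ∀ z ∈ solSet f C,
        breg φ u' x' z ≤ breg φ (u - t • f' i x) (gradconj φ (u - t • f' i x)) z) ∧
    ∀ (σ : ℝ) (N : Euc d → ℝ), 0 < σ → IsANorm N → StronglyConvexWrt φ σ N →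
      ∀ z ∈ solSet f C,
        breg φ u' x' z ≤
          breg φ (u - (σ * f i x / (dualN N (f' i x)) ^ 2) • f' i x)
            (gradconj φ (u - (σ * f i x / (dualN N (f' i x)) ^ 2) • f' i x)) z :=
  statement9_general φ C Dset f f' hφ hf hA2 x u hu i hfpos tk htk u' x' hu' hx'
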